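/- Let G be an unmixed bipartite graph with perfect matching {x_1,y_1},...,{x_n,y_n} (x_i ∈ V1, y_i ∈ V2). Then for every j, the induced subgraph of G on N(x_j) ∪ N(y_j) is a complete bipartite graph, i.e., every vertex of N(y_j) is adjacent to every vertex of N(x_j). -/

import Mathlib

open SimpleGraph MvPolynomial

variable {V : Type*}

/-- `s` is an independent set of the graph `G`. -/
def IsIndep (G : SimpleGraph V) (s : Set V) : Prop :=
  s.Pairwise fun a b => ¬ G.Adj a b

/-- `s` is a maximal independent set of the graph `G`. -/
def IsMaxIndep (G : SimpleGraph V) (s : Set V) : Prop :=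
  IsIndep G s ∧ ∀ t : Set V, IsIndep G t → s ⊆ t → s = t

/-- `G` is unmixed: all maximal independent sets have the same cardinality. -/
def Unmixed (G : SimpleGraph V) : Prop :=
  ∀ s t : Set V, IsMaxIndep G s → IsMaxIndep G t → s.ncard = t.ncard

/-- `V1, V2` form a bipartition of the graph `G`. -/
def IsBipartition (G : SimpleGraph V) (V1 V2 : Set V) : Prop :=
  Disjoint V1 V2 ∧ V1 ∪ V2 = Set.univ ∧
    ∀ ⦃a b⦄, G.Adj a b → (a ∈ V1 ∧ b ∈ V2) ∨ (a ∈ V2 ∧ b ∈ V1)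

/-- `G` has no isolated vertices. -/
def NoIsolated (G : SimpleGraph V) : Prop := ∀ v, ∃ w, G.Adj v w

/-- The edges `{x i, y i}` form a perfect matching of `G`. -/
def PMatch (G : SimpleGraph V) (n : ℕ) (x y : Fin n → V) : Prop :=
  Function.Injective x ∧ Function.Injective y ∧ (∀ i j, x i ≠ y j) ∧
    (∀ v, (∃ i, v = x i) ∨ (∃ i, v = y i)) ∧ ∀ i, G.Adj (x i) (y i)

/-- Condition 1: for each `i` the induced subgraph on `N(x i) ∪ N(y i)` is complete
bipartite, i.e. every vertex of `N(y i)` is adjacent to every vertex of `N(x i)`. -/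
def Cond1 (G : SimpleGraph V) (n : ℕ) (x y : Fin n → V) : Prop :=
  ∀ i, ∀ a ∈ G.neighborSet (y i), ∀ b ∈ G.neighborSet (x i), G.Adj a b

/-- Condition 2: for `i ≠ j`, not both `x i ~ y j` and `x j ~ y i`. -/
def Cond2 (G : SimpleGraph V) (n : ℕ) (x y : Fin n → V) : Prop :=
  ∀ i j, i ≠ j → G.Adj (x i) (y j) → ¬ G.Adj (x j) (y i)

/-! The vertices `x i` form a maximal independent set of size `n`, so by unmixedness every maximal
independent set has size `n`; an independent set contains at most one end of each matching edge,
hence one of size `n` contains an end of every matching edge. If `x k ∈ N(y j)` and `y l ∈ N(x j)`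
were not adjacent, a maximal independent set through `x k` and `y l` would have to contain `x j`
or `y j`, each of which is adjacent to one of them. -/

lemma isIndep_pair {G : SimpleGraph V} {a b : V} (h : ¬ G.Adj a b) : IsIndep G {a, b} :=
  Set.pairwise_pair.mpr fun _ => ⟨h, fun h' => h h'.symm⟩

lemma IsIndep.exists_isMaxIndep_superset [Finite V] {G : SimpleGraph V} {s : Set V}
    (hs : IsIndep G s) : ∃ M, s ⊆ M ∧ IsMaxIndep G M := by
  obtain ⟨M, ⟨hM, hsM⟩, hmax⟩ :=
    (Set.toFinite {t : Set V | IsIndep G t ∧ s ⊆ t}).exists_maximalFor id _ ⟨s, hs, subset_rfl⟩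
  exact ⟨M, hsM, hM, fun t ht hMt => hMt.antisymm (hmax ⟨ht, hsM.trans hMt⟩ hMt)⟩

namespace IsBipartition

variable {G : SimpleGraph V} {V1 V2 : Set V} {v w : V}

lemma mem_left_of_adj (hb : IsBipartition G V1 V2) (hw : w ∈ V2) (h : G.Adj v w) : v ∈ V1 := by
  rcases hb.2.2 h with ⟨hv, -⟩ | ⟨-, hw'⟩
  · exact hv
  · exact absurd hw (Set.disjoint_left.mp hb.1 hw')

lemma mem_right_of_adj (hb : IsBipartition G V1 V2) (hw : w ∈ V1) (h : G.Adj v w) : v ∈ V2 := by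
  rcases hb.2.2 h with ⟨-, hw'⟩ | ⟨hv, -⟩
  · exact absurd hw' (Set.disjoint_left.mp hb.1 hw)
  · exact hv

lemma isIndep_of_subset_left (hb : IsBipartition G V1 V2) {s : Set V} (hs : s ⊆ V1) :
    IsIndep G s := fun _ ha _ hb' _ h =>
  Set.disjoint_left.mp hb.1 (hs hb') (hb.mem_right_of_adj (hs ha) h.symm)

end IsBipartition

namespace PMatch

variable {G : SimpleGraph V} {n : ℕ} {x y : Fin n → V}

lemma exists_eq_left_of_mem {V1 V2 : Set V} (hm : PMatch G n x y) (hV : Disjoint V1 V2)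
    (hy : ∀ i, y i ∈ V2) {v : V} (hv : v ∈ V1) : ∃ k, x k = v := by
  rcases hm.2.2.2.1 v with ⟨k, rfl⟩ | ⟨k, rfl⟩
  · exact ⟨k, rfl⟩
  · exact absurd (hy k) (Set.disjoint_left.mp hV hv)

lemma exists_eq_right_of_mem {V1 V2 : Set V} (hm : PMatch G n x y) (hV : Disjoint V1 V2)
    (hx : ∀ i, x i ∈ V1) {v : V} (hv : v ∈ V2) : ∃ k, y k = v := by
  rcases hm.2.2.2.1 v with ⟨k, rfl⟩ | ⟨k, rfl⟩
  · exact absurd (hx k) (Set.disjoint_right.mp hV hv)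
  · exact ⟨k, rfl⟩

lemma ncard_range_left (hm : PMatch G n x y) : (Set.range x).ncard = n := by
  rw [← Set.image_univ, Set.ncard_image_of_injective _ hm.1, Set.ncard_univ, Nat.card_fin]

lemma isMaxIndep_range_left {V1 V2 : Set V} (hm : PMatch G n x y) (hb : IsBipartition G V1 V2)
    (hx : ∀ i, x i ∈ V1) : IsMaxIndep G (Set.range x) := by
  refine ⟨hb.isIndep_of_subset_left (Set.range_subset_iff.mpr hx), fun t ht hxt => ?_⟩
  refine hxt.antisymm fun v hv => ?_
  rcases hm.2.2.2.1 v with ⟨k, rfl⟩ | ⟨k, rfl⟩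
  · exact ⟨k, rfl⟩
  · exact absurd (hm.2.2.2.2 k) (ht (hxt ⟨k, rfl⟩) hv (hm.2.2.1 k k))

lemma mem_or_mem_of_isIndep (hm : PMatch G n x y) {M : Set V} (hM : IsIndep G M)
    (hcard : n ≤ M.ncard) (j : Fin n) : x j ∈ M ∨ y j ∈ M := by
  have hcover : ∀ v, ∃ i, v = x i ∨ v = y i := fun v =>
    (hm.2.2.2.1 v).elim (fun ⟨i, h⟩ => ⟨i, Or.inl h⟩) (fun ⟨i, h⟩ => ⟨i, Or.inr h⟩)
  choose idx hidx using hcover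
  have hinj : Set.InjOn idx M := by
    intro u hu v hv huv
    by_contra hne
    rcases hidx u with hu' | hu' <;> rcases hidx v with hv' | hv' <;> rw [huv] at hu' <;>
      generalize idx v = i at hu' hv' <;> subst hu' hv'
    · exact hne rfl
    · exact hM hu hv hne (hm.2.2.2.2 i)
    · exact hM hv hu (Ne.symm hne) (hm.2.2.2.2 i)
    · exact hne rfl
  have himg : idx '' M = Set.univ :=
    Set.eq_of_subset_of_ncard_le (Set.subset_univ _)
      (by rwa [hinj.ncard_image, Set.ncard_univ, Nat.card_fin]) Set.finite_univ
  obtain ⟨v, hv, rfl⟩ := himg.symm ▸ Set.mem_univ j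
  exact (hidx v).elim (fun h => Or.inl (h ▸ hv)) (fun h => Or.inr (h ▸ hv))

end PMatch

/-- In an unmixed bipartite graph with a perfect matching `{x i, y i}`, for every `j`
the induced subgraph on `N(x j) ∪ N(y j)` is complete bipartite. -/
theorem stmt4 [Fintype V] (G : SimpleGraph V) (V1 V2 : Set V)
    (hb : IsBipartition G V1 V2) {n : ℕ} (x y : Fin n → V)
    (hx : ∀ i, x i ∈ V1) (hy : ∀ i, y i ∈ V2)
    (hm : PMatch G n x y) (hu : Unmixed G) :
    Cond1 G n x y := by
  intro j a ha b hb'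
  rw [mem_neighborSet] at ha hb'
  obtain ⟨k, rfl⟩ := hm.exists_eq_left_of_mem hb.1 hy (hb.mem_left_of_adj (hy j) ha.symm)
  obtain ⟨l, rfl⟩ := hm.exists_eq_right_of_mem hb.1 hx (hb.mem_right_of_adj (hx j) hb'.symm)
  by_contra hkl
  obtain ⟨M, hklM, hM⟩ := (isIndep_pair hkl).exists_isMaxIndep_superset
  have hcard : n ≤ M.ncard := (hu _ _ (hm.isMaxIndep_range_left hb hx) hM ▸ hm.ncard_range_left).ge
  rcases hm.mem_or_mem_of_isIndep hM.1 hcard j with hxj | hyj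
  · exact hM.1 hxj (hklM (by simp)) (G.ne_of_adj hb') hb'
  · exact hM.1 (hklM (by simp)) hyj (G.ne_of_adj ha.symm) ha.symm
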